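/- arXiv:1306.3046 — 12 statements merged into one kernel-verified Lean document; each statement's English description precedes it below -/
import Mathlib

section
/- Let (A,↖,↑,↗) be a partially dendriform 3-algebra over a field k. Then the trilinear operation ∗(x,y,z) := ↖(x,y,z) + ↑(x,y,z) + ↗(x,y,z) makes A into a partially associative 3-algebra. -/
/-- The sum of three ternary operations. -/
def star3 {A : Type*} [AddCommGroup A] (f g h : A → A → A → A) : A → A → A → A :=
  fun x y z => f x y z + g x y z + h x y z

/-- A partially associative 3-algebra structure on a ternary operation. -/
def PartAssoc3 {A : Type*} [AddCommGroup A] (m : A → A → A → A) : Prop :=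
  ∀ x1 x2 x3 x4 x5 : A,
    m (m x1 x2 x3) x4 x5 + m x1 (m x2 x3 x4) x5 + m x1 x2 (m x3 x4 x5) = 0

/-- The defining relations of a partially dendriform 3-algebra with operations
`↖ = nw`, `↑ = up`, `↗ = ne`. -/
def PartDend3 {A : Type*} [AddCommGroup A] (nw up ne : A → A → A → A) : Prop :=
  (∀ x1 x2 x3 x4 x5 : A,
    nw (nw x1 x2 x3) x4 x5 + nw x1 (star3 nw up ne x2 x3 x4) x5
      + nw x1 x2 (star3 nw up ne x3 x4 x5) = 0) ∧
  (∀ x1 x2 x3 x4 x5 : A,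
    nw (up x1 x2 x3) x4 x5 + up x1 (nw x2 x3 x4) x5
      + up x1 x2 (star3 nw up ne x3 x4 x5) = 0) ∧
  (∀ x1 x2 x3 x4 x5 : A,
    nw (ne x1 x2 x3) x4 x5 + up x1 (up x2 x3 x4) x5
      + ne x1 x2 (nw x3 x4 x5) = 0) ∧
  (∀ x1 x2 x3 x4 x5 : A,
    up (star3 nw up ne x1 x2 x3) x4 x5 + up x1 (ne x2 x3 x4) x5
      + ne x1 x2 (up x3 x4 x5) = 0) ∧
  (∀ x1 x2 x3 x4 x5 : A,
    ne (star3 nw up ne x1 x2 x3) x4 x5 + ne x1 (star3 nw up ne x2 x3 x4) x5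
      + ne x1 x2 (ne x3 x4 x5) = 0)

/-- Let `(A, ↖, ↑, ↗)` be a partially dendriform 3-algebra over a field `k`.
Then `∗ := ↖ + ↑ + ↗` makes `A` into a partially associative 3-algebra. -/
theorem partDend3_star_partAssoc3 {k A : Type*} [Field k] [AddCommGroup A] [Module k A]
    (nw up ne : A →ₗ[k] A →ₗ[k] A →ₗ[k] A)
    (h : PartDend3 (fun x y z => nw x y z) (fun x y z => up x y z) (fun x y z => ne x y z)) :
    PartAssoc3 (star3 (fun x y z => nw x y z) (fun x y z => up x y z)
      (fun x y z => ne x y z)) := by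
  obtain ⟨h1, h2, h3, h4, h5⟩ := h
  intro x1 x2 x3 x4 x5
  have e1 := h1 x1 x2 x3 x4 x5
  have e2 := h2 x1 x2 x3 x4 x5
  have e3 := h3 x1 x2 x3 x4 x5
  have e4 := h4 x1 x2 x3 x4 x5
  have e5 := h5 x1 x2 x3 x4 x5
  simp only [star3, map_add, LinearMap.add_apply] at *
  linear_combination (norm := abel) e1 + e2 + e3 + e4 + e5
end

section
/- Let (A,↖,↑,↗) be a totally dendriform 3-algebra over a field k. Then the trilinear operation ∗(x,y,z) := ↖(x,y,z) + ↑(x,y,z) + ↗(x,y,z) makes A into a totally associative 3-algebra. -/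
/-- A totally associative 3-algebra structure on a ternary operation. -/
def TotAssoc3 {A : Type*} [AddCommGroup A] (m : A → A → A → A) : Prop :=
  ∀ x1 x2 x3 x4 x5 : A,
    m (m x1 x2 x3) x4 x5 = m x1 (m x2 x3 x4) x5 ∧
    m x1 (m x2 x3 x4) x5 = m x1 x2 (m x3 x4 x5)

/-- The defining relations of a totally dendriform 3-algebra with operations
`↖ = nw`, `↑ = up`, `↗ = ne`. -/
def TotDend3 {A : Type*} [AddCommGroup A] (nw up ne : A → A → A → A) : Prop :=
  (∀ x1 x2 x3 x4 x5 : A,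
    nw (nw x1 x2 x3) x4 x5 = nw x1 (star3 nw up ne x2 x3 x4) x5 ∧
    nw x1 (star3 nw up ne x2 x3 x4) x5 = nw x1 x2 (star3 nw up ne x3 x4 x5)) ∧
  (∀ x1 x2 x3 x4 x5 : A,
    nw (up x1 x2 x3) x4 x5 = up x1 (nw x2 x3 x4) x5 ∧
    up x1 (nw x2 x3 x4) x5 = up x1 x2 (star3 nw up ne x3 x4 x5)) ∧
  (∀ x1 x2 x3 x4 x5 : A,
    nw (ne x1 x2 x3) x4 x5 = up x1 (up x2 x3 x4) x5 ∧
    up x1 (up x2 x3 x4) x5 = ne x1 x2 (nw x3 x4 x5)) ∧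
  (∀ x1 x2 x3 x4 x5 : A,
    up (star3 nw up ne x1 x2 x3) x4 x5 = up x1 (ne x2 x3 x4) x5 ∧
    up x1 (ne x2 x3 x4) x5 = ne x1 x2 (up x3 x4 x5)) ∧
  (∀ x1 x2 x3 x4 x5 : A,
    ne (star3 nw up ne x1 x2 x3) x4 x5 = ne x1 (star3 nw up ne x2 x3 x4) x5 ∧
    ne x1 (star3 nw up ne x2 x3 x4) x5 = ne x1 x2 (ne x3 x4 x5))

/-- Let `(A, ↖, ↑, ↗)` be a totally dendriform 3-algebra over a field `k`.
Then `∗ := ↖ + ↑ + ↗` makes `A` into a totally associative 3-algebra. -/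
theorem totDend3_star_totAssoc3 {k A : Type*} [Field k] [AddCommGroup A] [Module k A]
    (nw up ne : A →ₗ[k] A →ₗ[k] A →ₗ[k] A)
    (h : TotDend3 (fun x y z => nw x y z) (fun x y z => up x y z) (fun x y z => ne x y z)) :
    TotAssoc3 (star3 (fun x y z => nw x y z) (fun x y z => up x y z)
      (fun x y z => ne x y z)) := by
  obtain ⟨h1, h2, h3, h4, h5⟩ := h
  intro a b c d e
  constructor
  · have e1 := (h1 a b c d e).1
    have e2 := (h2 a b c d e).1
    have e3 := (h3 a b c d e).1
    have e4 := (h4 a b c d e).1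
    have e5 := (h5 a b c d e).1
    simp only [star3, map_add, LinearMap.add_apply] at *
    linear_combination (norm := abel) e1 + e2 + e3 + e4 + e5
  · have e1 := (h1 a b c d e).2
    have e2 := (h2 a b c d e).2
    have e3 := (h3 a b c d e).2
    have e4 := (h4 a b c d e).2
    have e5 := (h5 a b c d e).2
    simp only [star3, map_add, LinearMap.add_apply] at *
    linear_combination (norm := abel) e1 + e2 + e3 + e4 + e5
end

section
/- Let (A,{·,·,·}) be a 3-pre-Lie algebra over a field k. Then the trilinear operation [x,y,z] := {x,y,z} + {y,z,x} + {z,x,y} makes A into a 3-Lie algebra. -/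
/-- The cyclic sum `○{x,y,z} = {x,y,z} + {y,z,x} + {z,x,y}` of a ternary operation. -/
def cyc3 {A : Type*} [AddCommGroup A] (f : A → A → A → A) : A → A → A → A :=
  fun x y z => f x y z + f y z x + f z x y

/-- A ternary operation is skew-symmetric:
`f(x_{σ(1)}, x_{σ(2)}, x_{σ(3)}) = sgn(σ) f(x₁, x₂, x₃)` for every permutation `σ`. -/
def Skew3 {A : Type*} [AddCommGroup A] (f : A → A → A → A) : Prop :=
  ∀ (σ : Equiv.Perm (Fin 3)) (x : Fin 3 → A),
    f (x (σ 0)) (x (σ 1)) (x (σ 2)) = (Equiv.Perm.sign σ : ℤ) • f (x 0) (x 1) (x 2)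

/-- A 3-Lie algebra structure: skew-symmetry plus the 3-Jacobi identity. -/
def Lie3 {A : Type*} [AddCommGroup A] (f : A → A → A → A) : Prop :=
  Skew3 f ∧
  ∀ x1 x2 x3 x4 x5 : A,
    f (f x1 x2 x3) x4 x5 =
      f (f x1 x4 x5) x2 x3 + f x1 (f x2 x4 x5) x3 + f x1 x2 (f x3 x4 x5)

/-- The defining relations of a 3-pre-Lie algebra. -/
def PreLie3 {A : Type*} [AddCommGroup A] (f : A → A → A → A) : Prop :=
  (∀ x1 x2 x3 : A, f x1 x2 x3 = - f x1 x3 x2) ∧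
  (∀ x1 x2 x3 x4 x5 : A,
    f (f x1 x2 x3) x4 x5 =
      f (f x1 x4 x5) x2 x3 + f x1 (cyc3 f x2 x4 x5) x3 + f x1 x2 (cyc3 f x3 x4 x5)) ∧
  (∀ x1 x2 x3 x4 x5 : A,
    f x4 (cyc3 f x1 x2 x3) x5 =
      f (f x4 x1 x5) x2 x3 + f (f x4 x2 x5) x3 x1 + f (f x4 x3 x5) x1 x2)

/-- Let `(A, {·,·,·})` be a 3-pre-Lie algebra over a field `k`.
Then `[x,y,z] := {x,y,z} + {y,z,x} + {z,x,y}` makes `A` into a 3-Lie algebra. -/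
theorem preLie3_cyclic_lie3 {k A : Type*} [Field k] [AddCommGroup A] [Module k A]
    (f : A →ₗ[k] A →ₗ[k] A →ₗ[k] A)
    (h : PreLie3 (fun x y z => f x y z)) :
    Lie3 (cyc3 (fun x y z => f x y z)) := by
  obtain ⟨h1, h2, h3⟩ := h
  have h1' : ∀ x y z : A, f x y z = - f x z y := h1
  have fadd1 : ∀ u v y z : A, f (u + v) y z = f u y z + f v y z := by intros; simp
  have fneg1 : ∀ u y z : A, f (-u) y z = - f u y z := by intros; simp
  have h2' : ∀ a b c d e : A, f (f a b c) d e =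
      f (f a d e) b c + f a (f b d e + f d e b + f e b d) c
        + f a b (f c d e + f d e c + f e c d) := by
    intro a b c d e
    simpa [cyc3] using h2 a b c d e
  have h3' : ∀ a b c d e : A, f d (f a b c + f b c a + f c a b) e =
      f (f d a e) b c + f (f d b e) c a + f (f d c e) a b := by
    intro a b c d e
    simpa [cyc3] using h3 a b c d e
  -- swap lemmas for the cyclic bracket
  have s12 : ∀ x y z : A, cyc3 (fun x y z => f x y z) x z y
      = - cyc3 (fun x y z => f x y z) x y z := by
    intro x y z
    simp only [cyc3]
    rw [h1' x z y, h1' z y x, h1' y x z]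
    abel
  have s01 : ∀ x y z : A, cyc3 (fun x y z => f x y z) y x z
      = - cyc3 (fun x y z => f x y z) x y z := by
    intro x y z
    simp only [cyc3]
    rw [h1' y x z, h1' x z y, h1' z y x]
    abel
  have scyc : ∀ x y z : A, cyc3 (fun x y z => f x y z) y z x
      = cyc3 (fun x y z => f x y z) x y z := by
    intro x y z
    simp only [cyc3]; abel
  constructor
  · -- skew-symmetry
    intro σ x
    have hcases : ∀ τ : Equiv.Perm (Fin 3), τ = 1 ∨ τ = Equiv.swap 0 1 ∨ τ = Equiv.swap 0 2 ∨
        τ = Equiv.swap 1 2 ∨ τ = Equiv.swap 0 1 * Equiv.swap 1 2 ∨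
        τ = Equiv.swap 1 2 * Equiv.swap 0 1 := by decide
    rcases hcases σ with rfl | rfl | rfl | rfl | rfl | rfl
    · simp
    · have hsgn : ((Equiv.Perm.sign (Equiv.swap (0:Fin 3) 1)) : ℤ) = -1 := by decide
      have e0 : (Equiv.swap (0:Fin 3) 1) 0 = 1 := by decide
      have e1 : (Equiv.swap (0:Fin 3) 1) 1 = 0 := by decide
      have e2 : (Equiv.swap (0:Fin 3) 1) 2 = 2 := by decide
      rw [e0, e1, e2, hsgn, s01, neg_smul, one_smul]
    · have hsgn : ((Equiv.Perm.sign (Equiv.swap (0:Fin 3) 2)) : ℤ) = -1 := by decide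
      have e0 : (Equiv.swap (0:Fin 3) 2) 0 = 2 := by decide
      have e1 : (Equiv.swap (0:Fin 3) 2) 1 = 1 := by decide
      have e2 : (Equiv.swap (0:Fin 3) 2) 2 = 0 := by decide
      rw [e0, e1, e2, hsgn, neg_smul, one_smul]
      rw [show cyc3 (fun x y z => f x y z) (x 2) (x 1) (x 0)
          = cyc3 (fun x y z => f x y z) (x 0) (x 2) (x 1) from scyc _ _ _, s12]
    · have hsgn : ((Equiv.Perm.sign (Equiv.swap (1:Fin 3) 2)) : ℤ) = -1 := by decide
      have e0 : (Equiv.swap (1:Fin 3) 2) 0 = 0 := by decide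
      have e1 : (Equiv.swap (1:Fin 3) 2) 1 = 2 := by decide
      have e2 : (Equiv.swap (1:Fin 3) 2) 2 = 1 := by decide
      rw [e0, e1, e2, hsgn, s12, neg_smul, one_smul]
    · have hsgn : ((Equiv.Perm.sign (Equiv.swap (0:Fin 3) 1 * Equiv.swap 1 2)) : ℤ) = 1 := by
        decide
      have e0 : ((Equiv.swap (0:Fin 3) 1 * Equiv.swap 1 2 : Equiv.Perm (Fin 3))) 0 = 1 := by decide
      have e1 : ((Equiv.swap (0:Fin 3) 1 * Equiv.swap 1 2 : Equiv.Perm (Fin 3))) 1 = 2 := by decide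
      have e2 : ((Equiv.swap (0:Fin 3) 1 * Equiv.swap 1 2 : Equiv.Perm (Fin 3))) 2 = 0 := by decide
      rw [e0, e1, e2, hsgn, one_smul, scyc]
    · have hsgn : ((Equiv.Perm.sign (Equiv.swap (1:Fin 3) 2 * Equiv.swap 0 1)) : ℤ) = 1 := by
        decide
      have e0 : ((Equiv.swap (1:Fin 3) 2 * Equiv.swap 0 1 : Equiv.Perm (Fin 3))) 0 = 2 := by decide
      have e1 : ((Equiv.swap (1:Fin 3) 2 * Equiv.swap 0 1 : Equiv.Perm (Fin 3))) 1 = 0 := by decide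
      have e2 : ((Equiv.swap (1:Fin 3) 2 * Equiv.swap 0 1 : Equiv.Perm (Fin 3))) 2 = 1 := by decide
      rw [e0, e1, e2, hsgn, one_smul, scyc, scyc]
  · -- 3-Jacobi identity
    intro a b c d e
    simp only [cyc3]
    simp only [fadd1]
    rw [h1' d e (f a b c + f b c a + f c a b)]
    rw [h3' a b c d e, h3' a b c e d]
    rw [h2' a b c d e, h2' b c a d e, h2' c a b d e]
    rw [h1' d e a, h1' d e b, h1' d e c]
    simp only [fneg1]
    abel
end

section
/- Let (A,{·,·,·}) be a generalized pre-Lie algebra of order 3 over a field k. Then the trilinear operation [x,y,z] := {x,y,z} + {y,z,x} + {z,x,y} makes A into a generalized Lie algebra of order 3. -/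
/-- A generalized Lie algebra of order 3. -/
def GenLie3 {A : Type*} [AddCommGroup A] (f : A → A → A → A) : Prop :=
  Skew3 f ∧
  ∀ x1 x2 x3 x4 x5 : A,
    f (f x1 x2 x3) x4 x5 - f (f x1 x2 x4) x3 x5 + f (f x1 x3 x4) x2 x5
      - f (f x2 x3 x4) x1 x5 + f (f x1 x2 x5) x3 x4 + f (f x3 x4 x5) x1 x2
      - f (f x1 x3 x5) x2 x4 - f (f x2 x4 x5) x1 x3 + f (f x1 x4 x5) x2 x3
      + f (f x2 x3 x5) x1 x4 = 0

/-- The defining relations of a generalized pre-Lie algebra of order 3. -/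
def GenPreLie3 {A : Type*} [AddCommGroup A] (f : A → A → A → A) : Prop :=
  (∀ x1 x2 x3 : A, f x1 x2 x3 = - f x1 x3 x2) ∧
  (∀ x1 x2 x3 x4 x5 : A,
    f (f x1 x2 x3) x4 x5 =
      f (f x1 x2 x4) x3 x5 - f (f x1 x2 x5) x3 x4 - f (f x1 x3 x4) x2 x5
        + f (f x1 x3 x5) x2 x4 - f (f x1 x4 x5) x2 x3 - f x1 (cyc3 f x2 x3 x4) x5
        + f x1 (cyc3 f x2 x3 x5) x4 - f x1 (cyc3 f x2 x4 x5) x3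
        + f x1 (cyc3 f x3 x4 x5) x2)

/-!
The cyclic sum `[x,y,z] = {x,y,z} + {y,z,x} + {z,x,y}` is invariant under rotation by construction
and changes sign under `y ↔ z` because `{·,·,·}` does in its last two arguments, so it is
skew-symmetric. For the fundamental identity, expand `[[·,·,·],·,·]` by trilinearity: modulo the
skew-symmetry of `{·,·,·}`, the ten-term Lie expression in `x₁, …, x₅` is the alternating sum of the
five pre-Lie relations whose first argument is `x₁, …, x₅` respectively, each of which vanishes.
-/

section

variable {A : Type*} [AddCommGroup A]

def genPreLie3Relator (f : A → A → A → A) (x1 x2 x3 x4 x5 : A) : A :=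
  f (f x1 x2 x3) x4 x5 -
    (f (f x1 x2 x4) x3 x5 - f (f x1 x2 x5) x3 x4 - f (f x1 x3 x4) x2 x5
      + f (f x1 x3 x5) x2 x4 - f (f x1 x4 x5) x2 x3 - f x1 (cyc3 f x2 x3 x4) x5
      + f x1 (cyc3 f x2 x3 x5) x4 - f x1 (cyc3 f x2 x4 x5) x3
      + f x1 (cyc3 f x3 x4 x5) x2)

def genLie3Relator (g : A → A → A → A) (x1 x2 x3 x4 x5 : A) : A :=
  g (g x1 x2 x3) x4 x5 - g (g x1 x2 x4) x3 x5 + g (g x1 x3 x4) x2 x5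
    - g (g x2 x3 x4) x1 x5 + g (g x1 x2 x5) x3 x4 + g (g x3 x4 x5) x1 x2
    - g (g x1 x3 x5) x2 x4 - g (g x2 x4 x5) x1 x3 + g (g x1 x4 x5) x2 x3
    + g (g x2 x3 x5) x1 x4

theorem GenPreLie3.relator_eq_zero {f : A → A → A → A} (h : GenPreLie3 f) (x1 x2 x3 x4 x5 : A) :
    genPreLie3Relator f x1 x2 x3 x4 x5 = 0 :=
  sub_eq_zero.mpr (h.2 x1 x2 x3 x4 x5)

theorem genLie3_iff {g : A → A → A → A} :
    GenLie3 g ↔ Skew3 g ∧ ∀ x1 x2 x3 x4 x5 : A, genLie3Relator g x1 x2 x3 x4 x5 = 0 :=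
  Iff.rfl

theorem skew3_of_rotate_of_swap {g : A → A → A → A} (hrot : ∀ x y z, g y z x = g x y z)
    (hswap : ∀ x y z, g x z y = -g x y z) : Skew3 g := by
  intro σ x
  have hperm : ∀ σ : Equiv.Perm (Fin 3),
      (σ 0 = 0 ∧ σ 1 = 1 ∧ σ 2 = 2 ∧ Equiv.Perm.sign σ = 1) ∨
      (σ 0 = 0 ∧ σ 1 = 2 ∧ σ 2 = 1 ∧ Equiv.Perm.sign σ = -1) ∨
      (σ 0 = 1 ∧ σ 1 = 0 ∧ σ 2 = 2 ∧ Equiv.Perm.sign σ = -1) ∨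
      (σ 0 = 1 ∧ σ 1 = 2 ∧ σ 2 = 0 ∧ Equiv.Perm.sign σ = 1) ∨
      (σ 0 = 2 ∧ σ 1 = 0 ∧ σ 2 = 1 ∧ Equiv.Perm.sign σ = 1) ∨
      (σ 0 = 2 ∧ σ 1 = 1 ∧ σ 2 = 0 ∧ Equiv.Perm.sign σ = -1) := by
    decide
  rcases hperm σ with ⟨h0, h1, h2, hs⟩ | ⟨h0, h1, h2, hs⟩ | ⟨h0, h1, h2, hs⟩ | ⟨h0, h1, h2, hs⟩ |
      ⟨h0, h1, h2, hs⟩ | ⟨h0, h1, h2, hs⟩ <;>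
    rw [h0, h1, h2, hs] <;> simp only [Units.val_one, Units.val_neg, one_smul, neg_smul] <;> grind

theorem cyc3_rotate (f : A → A → A → A) (x y z : A) : cyc3 f y z x = cyc3 f x y z := by
  simp only [cyc3]
  abel

theorem cyc3_swap {f : A → A → A → A} (hf : ∀ x y z, f x y z = -f x z y) (x y z : A) :
    cyc3 f x z y = -cyc3 f x y z := by
  simp only [cyc3]
  rw [hf x z y, hf z y x, hf y x z]
  abel

theorem skew3_cyc3 {f : A → A → A → A} (hf : ∀ x y z, f x y z = -f x z y) : Skew3 (cyc3 f) :=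
  skew3_of_rotate_of_swap (cyc3_rotate f) (cyc3_swap hf)

theorem genLie3Relator_cyc3 {R : Type*} [CommSemiring R] [Module R A]
    (f : A →ₗ[R] A →ₗ[R] A →ₗ[R] A) (hf : ∀ x y z, f x y z = -f x z y) (x1 x2 x3 x4 x5 : A) :
    genLie3Relator (cyc3 (fun x y z => f x y z)) x1 x2 x3 x4 x5 =
      genPreLie3Relator (fun x y z => f x y z) x1 x2 x3 x4 x5
        - genPreLie3Relator (fun x y z => f x y z) x2 x1 x3 x4 x5
        + genPreLie3Relator (fun x y z => f x y z) x3 x1 x2 x4 x5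
        - genPreLie3Relator (fun x y z => f x y z) x4 x1 x2 x3 x5
        + genPreLie3Relator (fun x y z => f x y z) x5 x1 x2 x3 x4 := by
  -- Indexing the variables lets `simp` put the last two arguments of every `f`-term in
  -- increasing order (and nested terms in the middle), a normal form modulo skew-symmetry.
  obtain ⟨x, rfl, rfl, rfl, rfl, rfl⟩ :
      ∃ x : Fin 5 → A, x 0 = x1 ∧ x 1 = x2 ∧ x 2 = x3 ∧ x 3 = x4 ∧ x 4 = x5 :=
    ⟨![x1, x2, x3, x4, x5], rfl, rfl, rfl, rfl, rfl⟩
  have hord : ∀ (a : A) (i j : Fin 5), j < i → f a (x i) (x j) = -f a (x j) (x i) :=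
    fun a i j _ => hf a (x i) (x j)
  have hnest : ∀ a b c d e : A, f a b (f c d e) = -f a (f c d e) b :=
    fun a b c d e => hf a b _
  simp (disch := decide) only [genLie3Relator, genPreLie3Relator, cyc3, map_add, map_neg,
    LinearMap.add_apply, LinearMap.neg_apply, hnest, hord]
  abel

end

/-- Let `(A, {·,·,·})` be a generalized pre-Lie algebra of order 3 over a
field `k`. Then `[x,y,z] := {x,y,z} + {y,z,x} + {z,x,y}` makes `A` into a generalized
Lie algebra of order 3. -/
theorem genPreLie3_cyclic_genLie3 {k A : Type*} [Field k] [AddCommGroup A] [Module k A]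
    (f : A →ₗ[k] A →ₗ[k] A →ₗ[k] A)
    (h : GenPreLie3 (fun x y z => f x y z)) :
    GenLie3 (cyc3 (fun x y z => f x y z)) := by
  have hf : ∀ x y z, f x y z = -f x z y := h.1
  refine genLie3_iff.mpr ⟨skew3_cyc3 hf, fun x1 x2 x3 x4 x5 => ?_⟩
  simp only [genLie3Relator_cyc3 f hf, h.relator_eq_zero, sub_zero, add_zero]
end

section
/- Let (A,(·,·,·)) be a partially associative 3-algebra over a field k. Define the local commutator {x,y,z} := (x,y,z) − (x,z,y). Then (A,{·,·,·}) is a generalized pre-Lie algebra of order 3. -/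
/-!
Writing `Φ(x₁, a, b, c, d) = ((x₁,a,b),c,d) + (x₁,(a,b,c),d) + (x₁,a,(b,c,d))` for the partial
associativity relator, the defect of the generalized pre-Lie identity for the local commutator is
exactly the total antisymmetrization of `Φ(x₁, -)` in the last four arguments: expanding the local
commutators, each of the 72 monomials of the antisymmetrized relator appears exactly once with the
right sign. Hence it vanishes in a partially associative 3-algebra.
-/

open Equiv Finset

theorem Equiv.Perm.sum_fin_succ {M : Type*} [AddCommMonoid M] {n : ℕ}
    (f : Perm (Fin (n + 1)) → M) :
    ∑ σ, f σ = ∑ p, ∑ e : Perm (Fin n), f (Perm.decomposeFin.symm (p, e)) := by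
  rw [← Perm.decomposeFin.symm.sum_comp, Fintype.sum_prod_type]

section LocalCommutator

variable {A : Type*} [AddCommGroup A]

def localComm (m : A → A → A → A) : A → A → A → A :=
  fun x y z => m x y z - m x z y

def partAssocRel (m : A → A → A → A) (x a b c d : A) : A :=
  m (m x a b) c d + m x (m a b c) d + m x a (m b c d)

def genPreLie3Rel (f : A → A → A → A) (x1 x2 x3 x4 x5 : A) : A :=
  f (f x1 x2 x3) x4 x5 -
    (f (f x1 x2 x4) x3 x5 - f (f x1 x2 x5) x3 x4 - f (f x1 x3 x4) x2 x5
      + f (f x1 x3 x5) x2 x4 - f (f x1 x4 x5) x2 x3 - f x1 (cyc3 f x2 x3 x4) x5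
      + f x1 (cyc3 f x2 x3 x5) x4 - f x1 (cyc3 f x2 x4 x5) x3
      + f x1 (cyc3 f x3 x4 x5) x2)

theorem genPreLie3_iff (f : A → A → A → A) :
    GenPreLie3 f ↔ (∀ x1 x2 x3, f x1 x2 x3 = -f x1 x3 x2) ∧
      ∀ x1 x2 x3 x4 x5, genPreLie3Rel f x1 x2 x3 x4 x5 = 0 := by
  simp only [GenPreLie3, genPreLie3Rel, sub_eq_zero]

theorem localComm_antisymm (m : A → A → A → A) (x y z : A) :
    localComm m x y z = -localComm m x z y :=
  (neg_sub _ _).symm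

def alternate4 (F : A → A → A → A → A) (a b c d : A) : A :=
  ∑ σ : Perm (Fin 4), Perm.sign σ • F (![a, b, c, d] (σ 0)) (![a, b, c, d] (σ 1))
    (![a, b, c, d] (σ 2)) (![a, b, c, d] (σ 3))

theorem alternate4_eq_zero {F : A → A → A → A → A} (hF : ∀ a b c d, F a b c d = 0)
    (a b c d : A) : alternate4 F a b c d = 0 :=
  sum_eq_zero fun σ _ => by rw [hF, smul_zero]

theorem genPreLie3Rel_localComm {R : Type*} [CommSemiring R] [Module R A]
    (m : A →ₗ[R] A →ₗ[R] A →ₗ[R] A) (x1 x2 x3 x4 x5 : A) :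
    genPreLie3Rel (localComm fun x y z => m x y z) x1 x2 x3 x4 x5 =
      alternate4 (partAssocRel (fun x y z => m x y z) x1) x2 x3 x4 x5 := by
  -- numerals as successors, so that `decomposeFin_symm_apply_succ` evaluates the permutations
  have h2 : (2 : Fin 4) = Fin.succ 1 := rfl
  have h3 : (3 : Fin 4) = Fin.succ 2 := rfl
  have h2' : (2 : Fin 3) = Fin.succ 1 := rfl
  simp only [alternate4, h2, h3, h2', Perm.sum_fin_succ, Fin.sum_univ_succ, Fin.sum_univ_zero,
    Perm.decomposeFin.symm_sign, Perm.decomposeFin_symm_apply_zero,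
    Perm.decomposeFin_symm_apply_succ, Perm.decomposeFin_symm_apply_one]
  simp only [univ_unique, Perm.default_eq, sum_singleton, sum_neg_distrib, Perm.sign_one, one_smul,
    Units.neg_smul, ↓reduceIte, one_mul, neg_mul, mul_neg, neg_neg, one_ne_zero, add_zero, swap_self,
    refl_apply, swap_apply_right, swap_apply_def, Fin.succ_zero_eq_one, Fin.succ_one_eq_two,
    Fin.reduceSucc, Fin.reduceEq, Matrix.cons_val]
  simp only [genPreLie3Rel, localComm, partAssocRel, cyc3, map_add, map_sub, LinearMap.add_apply,
    LinearMap.sub_apply]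
  abel

end LocalCommutator

/-- Let `(A, (·,·,·))` be a partially associative 3-algebra over a field `k`.
Then the local commutator `{x,y,z} := (x,y,z) − (x,z,y)` makes `A` a generalized pre-Lie
algebra of order 3. -/
theorem partAssoc3_localComm_genPreLie3 {k A : Type*} [Field k] [AddCommGroup A] [Module k A]
    (m : A →ₗ[k] A →ₗ[k] A →ₗ[k] A)
    (h : PartAssoc3 (fun x y z => m x y z)) :
    GenPreLie3 (fun x y z => m x y z - m x z y) := by
  refine (genPreLie3_iff _).2 ⟨localComm_antisymm _, fun x1 x2 x3 x4 x5 => ?_⟩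
  exact (genPreLie3Rel_localComm m x1 x2 x3 x4 x5).trans
    (alternate4_eq_zero (h x1) x2 x3 x4 x5)
end

section
/- Every 3-pre-Lie algebra is a generalized pre-Lie algebra of order 3: if (A,{·,·,·}) is a 3-pre-Lie algebra over a field k, then the same trilinear operation {·,·,·} satisfies the defining identities of a generalized pre-Lie algebra of order 3. -/
/-- Every 3-pre-Lie algebra over a field `k` is a generalized pre-Lie algebra
of order 3 (with the same trilinear operation). -/
theorem preLie3_genPreLie3 {k A : Type*} [Field k] [AddCommGroup A] [Module k A]
    (f : A →ₗ[k] A →ₗ[k] A →ₗ[k] A)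
    (h : PreLie3 (fun x y z => f x y z)) :
    GenPreLie3 (fun x y z => f x y z) := by
  obtain ⟨h1, h2, h3⟩ := h
  have h1' : ∀ a b c : A, f a b c = - f a c b := h1
  have h2' : ∀ x1 x2 x3 x4 x5 : A,
      f (f x1 x2 x3) x4 x5 =
        f (f x1 x4 x5) x2 x3 + f x1 (cyc3 (fun x y z => f x y z) x2 x4 x5) x3
          + f x1 x2 (cyc3 (fun x y z => f x y z) x3 x4 x5) := h2
  have h3' : ∀ x1 x2 x3 x4 x5 : A,
      f x4 (cyc3 (fun x y z => f x y z) x1 x2 x3) x5 =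
        f (f x4 x1 x5) x2 x3 + f (f x4 x2 x5) x3 x1 + f (f x4 x3 x5) x1 x2 := h3
  refine ⟨h1, fun x1 x2 x3 x4 x5 => ?_⟩
  beta_reduce
  have e234 : f x1 (cyc3 (fun x y z => f x y z) x2 x3 x4) x5
      = f (f x1 x2 x5) x3 x4 - f (f x1 x3 x5) x2 x4 + f (f x1 x4 x5) x2 x3 := by
    have t := h3' x2 x3 x4 x1 x5
    rw [h1' (f x1 x3 x5) x4 x2] at t
    linear_combination (norm := abel) t
  have e235 : f x1 (cyc3 (fun x y z => f x y z) x2 x3 x5) x4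
      = f (f x1 x2 x4) x3 x5 - f (f x1 x3 x4) x2 x5 - f (f x1 x4 x5) x2 x3 := by
    have t := h3' x2 x3 x5 x1 x4
    rw [h1' (f x1 x3 x4) x5 x2, h1' x1 x5 x4] at t
    simp only [map_neg, LinearMap.neg_apply] at t
    linear_combination (norm := abel) t
  have e245 : f x1 (cyc3 (fun x y z => f x y z) x2 x4 x5) x3
      = f (f x1 x2 x3) x4 x5 + f (f x1 x3 x4) x2 x5 - f (f x1 x3 x5) x2 x4 := by
    have t := h3' x2 x4 x5 x1 x3
    rw [h1' x1 x4 x3, h1' x1 x5 x3] at t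
    simp only [map_neg, LinearMap.neg_apply] at t
    rw [h1' (f x1 x3 x4) x5 x2] at t
    linear_combination (norm := abel) t
  have e345 : f x1 (cyc3 (fun x y z => f x y z) x3 x4 x5) x2
      = - f (f x1 x2 x3) x4 x5 + f (f x1 x2 x4) x3 x5 - f (f x1 x2 x5) x3 x4 := by
    have t := h3' x3 x4 x5 x1 x2
    rw [h1' x1 x3 x2, h1' x1 x4 x2, h1' x1 x5 x2] at t
    simp only [map_neg, LinearMap.neg_apply] at t
    rw [h1' (f x1 x2 x4) x5 x3] at t
    linear_combination (norm := abel) t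
  have t2 := h2' x1 x2 x3 x4 x5
  rw [h1' x1 x2 (cyc3 (fun x y z => f x y z) x3 x4 x5), e245, e345] at t2
  rw [e234, e235, e245, e345]
  linear_combination (norm := abel) (-3 : ℤ) • t2
end

section
/- Let (A,(·,·,·)) be a totally associative 3-algebra over a field k and let P: A → A be a Rota-Baxter operator of weight zero on it. Define three trilinear operations on A by ↖(x,y,z) := (x,P(y),P(z)), ↑(x,y,z) := (P(x),y,P(z)), ↗(x,y,z) := (P(x),P(y),z). Then (A,↖,↑,↗) is a totally dendriform 3-algebra. -/
/-- Let `(A, (·,·,·))` be a totally associative 3-algebra over a field `k` and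
`P` a Rota-Baxter operator of weight zero on it. Then
`↖(x,y,z) := (x,P y,P z)`, `↑(x,y,z) := (P x,y,P z)`, `↗(x,y,z) := (P x,P y,z)`
make `A` into a totally dendriform 3-algebra. -/
theorem rotaBaxter_totAssoc3_totDend3 {k A : Type*} [Field k] [AddCommGroup A] [Module k A]
    (m : A →ₗ[k] A →ₗ[k] A →ₗ[k] A)
    (hm : TotAssoc3 (fun x y z => m x y z))
    (P : A →ₗ[k] A)
    (hP : ∀ x y z : A,
      m (P x) (P y) (P z) = P (m x (P y) (P z) + m (P x) y (P z) + m (P x) (P y) z)) :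
    TotDend3 (fun x y z => m x (P y) (P z)) (fun x y z => m (P x) y (P z))
      (fun x y z => m (P x) (P y) z) := by
  have h1 : ∀ x1 x2 x3 x4 x5 : A, m (m x1 x2 x3) x4 x5 = m x1 (m x2 x3 x4) x5 :=
    fun x1 x2 x3 x4 x5 => (hm x1 x2 x3 x4 x5).1
  have h2 : ∀ x1 x2 x3 x4 x5 : A, m x1 (m x2 x3 x4) x5 = m x1 x2 (m x3 x4 x5) :=
    fun x1 x2 x3 x4 x5 => (hm x1 x2 x3 x4 x5).2
  have key : ∀ x y z : A, P (m x (P y) (P z) + m (P x) y (P z) + m (P x) (P y) z)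
      = m (P x) (P y) (P z) := fun x y z => (hP x y z).symm
  refine ⟨?_, ?_, ?_, ?_, ?_⟩ <;> intro x1 x2 x3 x4 x5 <;>
    simp only [star3, key] <;>
    exact ⟨h1 _ _ _ _ _, h2 _ _ _ _ _⟩
end

section
/- Let (L,[·,·,·]) be a 3-Lie algebra over a field k and let P: L → L be a Rota-Baxter operator of weight zero on it. Define a trilinear operation on L by {x,y,z} := [x,P(y),P(z)]. Then (L,{·,·,·}) is a 3-pre-Lie algebra. -/
/-- Let `(L, [·,·,·])` be a 3-Lie algebra over a field `k` and `P` a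
Rota-Baxter operator of weight zero on it. Then `{x,y,z} := [x, P y, P z]` makes `L`
into a 3-pre-Lie algebra. -/
theorem rotaBaxter_lie3_preLie3 {k L : Type*} [Field k] [AddCommGroup L] [Module k L]
    (br : L →ₗ[k] L →ₗ[k] L →ₗ[k] L)
    (hbr : Lie3 (fun x y z => br x y z))
    (P : L →ₗ[k] L)
    (hP : ∀ x y z : L,
      br (P x) (P y) (P z) = P (br x (P y) (P z) + br (P x) y (P z) + br (P x) (P y) z)) :
    PreLie3 (fun x y z => br x (P y) (P z)) := by
  obtain ⟨hs, jac⟩ := hbr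
  -- swap of first two arguments
  have sw12 : ∀ a b c : L, br b a c = - br a b c := by
    intro a b c
    have := hs (Equiv.swap 0 1) ![a, b, c]
    simpa [Equiv.swap_apply_def, Fin.ext_iff] using this
  -- swap of last two arguments
  have sw23 : ∀ a b c : L, br a c b = - br a b c := by
    intro a b c
    have := hs (Equiv.swap 1 2) ![a, b, c]
    simpa [Equiv.swap_apply_def, Fin.ext_iff] using this
  -- cyclic invariance
  have cyc : ∀ a b c : L, br b c a = br a b c := by
    intro a b c
    rw [sw23 b a c, sw12 a b c, neg_neg]
  have cyc2 : ∀ a b c : L, br c a b = br a b c := by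
    intro a b c
    rw [cyc c a b]
  -- P applied to cyclic sums
  have Pcyc : ∀ a b c : L,
      P (cyc3 (fun x y z => br x (P y) (P z)) a b c) = br (P a) (P b) (P c) := by
    intro a b c
    have h1 : br b (P c) (P a) = br (P a) b (P c) := cyc (P a) b (P c)
    have h2 : br c (P a) (P b) = br (P a) (P b) c := cyc2 (P a) (P b) c
    simp only [cyc3, h1, h2]
    exact (hP a b c).symm
  refine ⟨?_, ?_, ?_⟩
  · intro x1 x2 x3
    exact sw23 x1 (P x3) (P x2)
  · intro x1 x2 x3 x4 x5
    simp only [Pcyc]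
    exact jac x1 (P x2) (P x3) (P x4) (P x5)
  · intro x1 x2 x3 x4 x5
    simp only [Pcyc]
    set a := P x1; set b := P x2; set c := P x3; set u := x4; set w := P x5
    have h : br (br a b c) u w = br (br a u w) b c + br a (br b u w) c + br a b (br c u w) := jac a b c u w
    have negl : ∀ x y z : L, br (-x) y z = - br x y z := by
      intro x y z; simp
    rw [sw12 (br a b c) u w, sw12 a u w, sw12 b u w, sw12 c u w,
      negl, negl, negl, cyc (a) (br b u w) c, cyc2 a b (br c u w), h]
    abel
end

section
/- Let (L,[·,·,·]) be a generalized Lie algebra of order 3 over a field k and let P: L → L be a Rota-Baxter operator of weight zero on it. Define a trilinear operation on L by {x,y,z} := [x,P(y),P(z)]. Then (L,{·,·,·}) is a generalized pre-Lie algebra of order 3. -/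
/-!
Write `{x,y,z} = [x, P y, P z]`. By skew-symmetry of `[·,·,·]`, the Rota–Baxter identity says
exactly that `P (○{a,b,c}) = [P a, P b, P c]`, hence
`[[P a, P b, P c], x, P d] = -{x, ○{a,b,c}, d}`.
Substituting `x₁, P x₂, …, P x₅` into the defining identity of `[·,·,·]`, six of its terms are
already of the form `{{x₁,a,b},c,d}` and the other four become `-{x₁, ○{a,b,c}, d}`; this is
the pre-Lie identity.
-/

def IsRotaBaxterOfWeightZero {A : Type*} [AddCommGroup A] (f : A → A → A → A) (P : A → A) :
    Prop :=
  ∀ x y z : A, f (P x) (P y) (P z) = P (f x (P y) (P z) + f (P x) y (P z) + f (P x) (P y) z)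

namespace Skew3

variable {A : Type*} [AddCommGroup A] {f : A → A → A → A}

theorem swap_left (hf : Skew3 f) (a b c : A) : f b a c = -f a b c := by
  have h := hf (Equiv.swap 0 1) ![a, b, c]
  have h2 : Equiv.swap (0 : Fin 3) 1 2 = 2 := by decide
  simpa [h2] using h

theorem swap_right (hf : Skew3 f) (a b c : A) : f a c b = -f a b c := by
  have h := hf (Equiv.swap 1 2) ![a, b, c]
  have h0 : Equiv.swap (1 : Fin 3) 2 0 = 0 := by decide
  simpa [h0] using h

theorem rotate (hf : Skew3 f) (a b c : A) : f a b c = f b c a := by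
  rw [hf.swap_left c b a, hf.swap_right c a b, hf.swap_left a c b, hf.swap_right a b c, neg_neg,
    neg_neg]

end Skew3

section RotaBaxter

variable {A : Type*} [AddCommGroup A] {f : A → A → A → A} {P : A → A}

theorem IsRotaBaxterOfWeightZero.apply_cyc3 (hf : Skew3 f) (hP : IsRotaBaxterOfWeightZero f P)
    (a b c : A) :
    P (cyc3 (fun x y z => f x (P y) (P z)) a b c) = f (P a) (P b) (P c) := by
  rw [hP a b c, cyc3, ← hf.rotate (P a) b (P c), hf.rotate c (P a) (P b)]

theorem GenLie3.genPreLie3_of_isRotaBaxterOfWeightZero (hf : GenLie3 f)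
    (hP : IsRotaBaxterOfWeightZero f P) :
    GenPreLie3 (fun x y z => f x (P y) (P z)) := by
  obtain ⟨hskew, hjacobi⟩ := hf
  refine ⟨fun x₁ x₂ x₃ => hskew.swap_right x₁ (P x₃) (P x₂), fun x₁ x₂ x₃ x₄ x₅ => ?_⟩
  have h := hjacobi x₁ (P x₂) (P x₃) (P x₄) (P x₅)
  simp only [hP.apply_cyc3 hskew]
  rw [hskew.swap_left (f (P x₂) (P x₃) (P x₄)) x₁ (P x₅),
    hskew.swap_left (f (P x₂) (P x₃) (P x₅)) x₁ (P x₄),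
    hskew.swap_left (f (P x₂) (P x₄) (P x₅)) x₁ (P x₃),
    hskew.swap_left (f (P x₃) (P x₄) (P x₅)) x₁ (P x₂), ← sub_eq_zero, ← h]
  abel

end RotaBaxter

/-- Let `(L, [·,·,·])` be a generalized Lie algebra of order 3 over a field
`k` and `P` a Rota-Baxter operator of weight zero on it. Then `{x,y,z} := [x, P y, P z]`
makes `L` into a generalized pre-Lie algebra of order 3. -/
theorem rotaBaxter_genLie3_genPreLie3 {k L : Type*} [Field k] [AddCommGroup L] [Module k L]
    (br : L →ₗ[k] L →ₗ[k] L →ₗ[k] L)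
    (hbr : GenLie3 (fun x y z => br x y z))
    (P : L →ₗ[k] L)
    (hP : ∀ x y z : L,
      br (P x) (P y) (P z) = P (br x (P y) (P z) + br (P x) y (P z) + br (P x) (P y) z)) :
    GenPreLie3 (fun x y z => br x (P y) (P z)) :=
  hbr.genPreLie3_of_isRotaBaxterOfWeightZero (P := P) hP
end

section
/- Let A be an associative algebra over a field k, let U be an A-bimodule with actions written a·u and u·a, and let α: U → A be a relative Rota-Baxter operator (O-operator) of weight zero, i.e. a k-linear map with α(u)α(v) = α(α(u)·v + u·α(v)) for all u,v ∈ U. Then the operations u ≺ v := u·α(v) and u ≻ v := α(u)·v make U into a dendriform algebra, and α is a homomorphism of the induced associative structures: α(u≺v + u≻v) = α(u)α(v) for all u,v ∈ U. -/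
/-- The dendriform algebra relations for two binary operations `≺ = prec`, `≻ = succ`. -/
def Dendriform {A : Type*} [AddCommGroup A] (prec succ : A → A → A) : Prop :=
  (∀ x y z : A, prec (prec x y) z = prec x (prec y z + succ y z)) ∧
  (∀ x y z : A, prec (succ x y) z = succ x (prec y z)) ∧
  (∀ x y z : A, succ (prec x y + succ x y) z = succ x (succ y z))

/-- Let `A` be an associative algebra over a field `k`, `U` an `A`-bimodule
(with left action `l` and right action `r`) and `α : U → A` a relative Rota-Baxter
operator of weight zero, i.e. `α(u)α(v) = α(α(u)·v + u·α(v))`. Then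
`u ≺ v := u·α(v)` and `u ≻ v := α(u)·v` make `U` into a dendriform algebra, and
`α(u ≺ v + u ≻ v) = α(u)α(v)`. -/
theorem relativeRotaBaxter_dendriform {k A U : Type*} [Field k] [Ring A] [Algebra k A]
    [AddCommGroup U] [Module k U]
    (l : A →ₗ[k] U →ₗ[k] U) (r : U →ₗ[k] A →ₗ[k] U)
    (hl : ∀ (a b : A) (u : U), l (a * b) u = l a (l b u))
    (hr : ∀ (u : U) (a b : A), r u (a * b) = r (r u a) b)
    (hlr : ∀ (a : A) (u : U) (b : A), r (l a u) b = l a (r u b))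
    (α : U →ₗ[k] A)
    (hα : ∀ u v : U, α u * α v = α (l (α u) v + r u (α v))) :
    Dendriform (fun u v : U => r u (α v)) (fun u v : U => l (α u) v) ∧
    ∀ u v : U, α (r u (α v) + l (α u) v) = α u * α v := by
  refine ⟨⟨fun x y z => ?_, fun x y z => hlr _ _ _, fun x y z => ?_⟩, fun u v => ?_⟩
  · show r (r x (α y)) (α z) = r x (α (r y (α z) + l (α y) z))
    rw [← hr, add_comm, ← hα]
  · show l (α (r x (α y) + l (α x) y)) z = l (α x) (l (α y) z)
    rw [add_comm, ← hα, hl]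
  · rw [add_comm, ← hα]
end

section
/- Let A be an associative algebra over a field k and let P: A → A be a Rota-Baxter operator of weight zero, i.e. a k-linear map with P(x)P(y) = P(P(x)y + xP(y)) for all x,y ∈ A. Then the operations x ≺ y := xP(y) and x ≻ y := P(x)y make A into a dendriform algebra. -/
/-- Let `A` be an associative algebra over a field `k` and `P : A → A` a
Rota-Baxter operator of weight zero. Then `x ≺ y := x P(y)` and `x ≻ y := P(x) y`
make `A` into a dendriform algebra. -/
theorem rotaBaxter_dendriform {k A : Type*} [Field k] [Ring A] [Algebra k A]
    (P : A →ₗ[k] A)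
    (hP : ∀ x y : A, P x * P y = P (P x * y + x * P y)) :
    Dendriform (fun x y : A => x * P y) (fun x y : A => P x * y) := by
  refine ⟨fun x y z => ?_, fun x y z => ?_, fun x y z => ?_⟩
  · simp only [mul_assoc, hP, map_add]; rw [add_comm]
  · simp [mul_assoc]
  · simp only [map_add, ← hP]
    rw [add_comm, ← map_add, ← hP, mul_assoc]
end

section
/- Let A be an associative algebra over a field k, let λ ∈ k, and let P: A → A be a Rota-Baxter operator of weight λ, i.e. a k-linear map with P(x)P(y) = P(P(x)y + xP(y) + λxy) for all x,y ∈ A. Then the operations x ≺ y := xP(y), x ≻ y := P(x)y and x · y := λxy make A into a tridendriform algebra. -/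
/-- The tridendriform algebra relations for operations `≺ = prec`, `≻ = succ`, `· = mid`. -/
def Tridendriform {A : Type*} [AddCommGroup A] (prec succ mid : A → A → A) : Prop :=
  (∀ x y z : A, prec (prec x y) z = prec x (prec y z + succ y z + mid y z)) ∧
  (∀ x y z : A, prec (succ x y) z = succ x (prec y z)) ∧
  (∀ x y z : A, succ (prec x y + succ x y + mid x y) z = succ x (succ y z)) ∧
  (∀ x y z : A, prec (mid x y) z = mid x (prec y z)) ∧
  (∀ x y z : A, mid (prec x y) z = mid x (succ y z)) ∧
  (∀ x y z : A, mid (succ x y) z = succ x (mid y z)) ∧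
  (∀ x y z : A, mid (mid x y) z = mid x (mid y z)) 

/-- Let `A` be an associative algebra over a field `k`, `λ ∈ k`, and
`P : A → A` a Rota-Baxter operator of weight `λ`. Then `x ≺ y := x P(y)`,
`x ≻ y := P(x) y` and `x · y := λ x y` make `A` into a tridendriform algebra. -/
theorem rotaBaxter_tridendriform {k A : Type*} [Field k] [Ring A] [Algebra k A]
    (lam : k) (P : A →ₗ[k] A)
    (hP : ∀ x y : A, P x * P y = P (P x * y + x * P y + lam • (x * y))) :
    Tridendriform (fun x y : A => x * P y) (fun x y : A => P x * y)
      (fun x y : A => lam • (x * y)) := by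
  refine ⟨?_, ?_, fun x y z => by
    show P (x * P y + P x * y + lam • (x * y)) * z = P x * (P y * z)
    rw [show x * P y + P x * y + lam • (x * y) = P x * y + x * P y + lam • (x * y) by abel,
      ← hP, mul_assoc], ?_, ?_, ?_, ?_⟩ <;> intro x y z <;>
    simp only [hP, map_add, map_smul, mul_add, mul_assoc, mul_smul_comm, smul_mul_assoc,
      smul_smul, smul_add, add_mul] <;> abel
end
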